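/- arXiv:1506.06378 — 6 statements merged into one kernel-verified Lean document; each statement's English description precedes it below -/
import Mathlib

section
/- Local Soundness (Theorem 1): if a dup-free NetKAT program p compiles to the FDD d (i.e., the relation 'p compiles to d' holds), then for every history h, ⟦p⟧ h = ⟦d⟧ h. -/
namespace NetKAT

/-- Packets: assignments of (natural-number) values to fields. -/
abbrev Packet (F : Type) := F → ℕ

/-- Histories: a nonempty list of packets, represented as (head packet, tail). -/
abbrev Hist (F : Type) := Packet F × List (Packet F)

/-- NetKAT predicates. -/
inductive Pred (F : Type) where
  | id : Pred F
  | drop : Pred F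
  | test : F → ℕ → Pred F
  | or : Pred F → Pred F → Pred F
  | and : Pred F → Pred F → Pred F
  | not : Pred F → Pred F

/-- NetKAT programs. -/
inductive Pol (F : Type) where
  | filter : Pred F → Pol F
  | mod : F → ℕ → Pol F
  | union : Pol F → Pol F → Pol F
  | seq : Pol F → Pol F → Pol F
  | star : Pol F → Pol F
  | dup : Pol F

/-- Iterates of a packet-processing function: `iterRel f 0 h = {h}` and
    `iterRel f (i+1) h = ⋃ h' ∈ f h, iterRel f i h'`. -/
def iterRel {F : Type} (f : Hist F → Set (Hist F)) : ℕ → Hist F → Set (Hist F)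
  | 0, h => {h}
  | i+1, h => ⋃ h' ∈ f h, iterRel f i h'

/-- Semantics of predicates (as filters on histories). -/
def predSem {F : Type} : Pred F → Hist F → Set (Hist F)
  | .id, h => {h}
  | .drop, _ => ∅
  | .test f n, h => if h.1 f = n then {h} else ∅
  | .or a b, h => predSem a h ∪ predSem b h
  | .and a b, h => ⋃ h' ∈ predSem a h, predSem b h'
  | .not a, h => {h} \ predSem a h

/-- Semantics of NetKAT programs: a history is mapped to a set of histories. -/
def polSem {F : Type} [DecidableEq F] : Pol F → Hist F → Set (Hist F)
  | .filter a, h => predSem a h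
  | .mod f n, h => {(Function.update h.1 f n, h.2)}
  | .union p q, h => polSem p h ∪ polSem q h
  | .seq p q, h => ⋃ h' ∈ polSem p h, polSem q h'
  | .star p, h => ⋃ i : ℕ, iterRel (fun h' => polSem p h') i h
  | .dup, h => {(h.1, h.1 :: h.2)}

/-- A program is dup-free if it contains no occurrence of `dup`. -/
def Pol.dupFree {F : Type} : Pol F → Prop
  | .filter _ => True
  | .mod _ _ => True
  | .union p q => p.dupFree ∧ q.dupFree
  | .seq p q => p.dupFree ∧ q.dupFree
  | .star p => p.dupFree
  | .dup => False

/-- Actions: finite partial maps from fields to values. -/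
abbrev Act (F : Type) := F → Option ℕ

/-- Apply an action to a packet. -/
def applyAct {F : Type} (a : Act F) (pk : Packet F) : Packet F :=
  fun f => (a f).getD (pk f)

/-- Semantics of an action on a history. -/
def actSem {F : Type} (a : Act F) (h : Hist F) : Set (Hist F) :=
  {(applyAct a h.1, h.2)}

/-- Forwarding decision diagrams. -/
inductive FDD (F : Type) where
  | const : Finset (Act F) → FDD F
  | cond : F → ℕ → FDD F → FDD F → FDD F

/-- Semantics of FDDs. -/
def fddSem {F : Type} : FDD F → Hist F → Set (Hist F)
  | .const s, h => ⋃ a ∈ s, actSem a h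
  | .cond f n d1 d2, h => if h.1 f = n then fddSem d1 h else fddSem d2 h

variable {F : Type} [Fintype F] [LinearOrder F]
set_option linter.unusedSectionVars false

/-- FDD union `d₁ ⊕ d₂`. -/
def fddUnion : FDD F → FDD F → FDD F
  | .const s1, .const s2 => .const (s1 ∪ s2)
  | .cond f n d1 d2, .const s =>
      .cond f n (fddUnion d1 (.const s)) (fddUnion d2 (.const s))
  | .const s, .cond f n d1 d2 =>
      .cond f n (fddUnion (.const s) d1) (fddUnion (.const s) d2)
  | .cond f1 n1 d11 d12, .cond f2 n2 d21 d22 =>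
    if f1 = f2 then
      if n1 = n2 then .cond f1 n1 (fddUnion d11 d21) (fddUnion d12 d22)
      else if n1 < n2 then
        .cond f1 n1 (fddUnion d11 d22) (fddUnion d12 (.cond f2 n2 d21 d22))
      else
        .cond f2 n2 (fddUnion d12 d21) (fddUnion (.cond f1 n1 d11 d12) d22)
    else if f1 < f2 then
      .cond f1 n1 (fddUnion d11 (.cond f2 n2 d21 d22)) (fddUnion d12 (.cond f2 n2 d21 d22))
    else
      .cond f2 n2 (fddUnion (.cond f1 n1 d11 d12) d21) (fddUnion (.cond f1 n1 d11 d12) d22)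
termination_by d1 d2 => sizeOf d1 + sizeOf d2
decreasing_by all_goals (simp <;> omega)

/-- Positive restriction `d|_{f=n}`. -/
def restrictPos (f : F) (n : ℕ) : FDD F → FDD F
  | .const s => .cond f n (.const s) (.const ∅)
  | .cond f1 n1 d1 d2 =>
    if f1 = f then
      if n1 = n then .cond f n d1 (.const ∅)
      else restrictPos f n d2
    else if f < f1 then .cond f n (.cond f1 n1 d1 d2) (.const ∅)
    else .cond f1 n1 (restrictPos f n d1) (restrictPos f n d2)

/-- Negative restriction `d|_{f≠n}`. -/
def restrictNeg (f : F) (n : ℕ) : FDD F → FDD F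
  | .const s => .cond f n (.const ∅) (.const s)
  | .cond f1 n1 d1 d2 =>
    if f1 = f then
      if n1 = n then .cond f n (.const ∅) d2
      else .cond f1 n1 d1 (restrictNeg f n d2)
    else if f < f1 then .cond f n (.const ∅) (.cond f1 n1 d1 d2)
    else .cond f1 n1 (restrictNeg f n d1) (restrictNeg f n d2)

/-- Sequencing of actions `a ; a'`: agrees with `a'` on the domain of `a'`, with `a` elsewhere. -/
def actSeq (a a' : Act F) : Act F :=
  fun f => (a' f).orElse (fun _ => a f)

/-- Sequencing of an action with an FDD, `a ⊙ d`. -/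
def actSeqFDD (a : Act F) : FDD F → FDD F
  | .const s => .const (s.image (actSeq a))
  | .cond f n d1 d2 =>
    match a f with
    | some m => if m = n then actSeqFDD a d1 else actSeqFDD a d2
    | none => .cond f n (actSeqFDD a d1) (actSeqFDD a d2)

/-- FDD sequencing `d₁ ⊙ d₂`. -/
noncomputable def fddSeq : FDD F → FDD F → FDD F
  | .const s, d => (s.toList.map (fun a => actSeqFDD a d)).foldr fddUnion (.const ∅)
  | .cond f n d1 d2, d =>
      fddUnion (restrictPos f n (fddSeq d1 d)) (restrictNeg f n (fddSeq d2 d))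

/-- The empty action `⊥`. -/
def emptyAct : Act F := fun _ => none

/-- FDD negation. -/
def fddNeg : FDD F → FDD F
  | .const s => if s = ∅ then .const {emptyAct} else .const ∅
  | .cond f n d1 d2 => .cond f n (fddNeg d1) (fddNeg d2)

/-- A boolean FDD: every constant diagram occurring in it is `∅` or `{⊥}`. -/
def FDD.boolean : FDD F → Prop
  | .const s => s = ∅ ∨ s = {emptyAct}
  | .cond _ _ d1 d2 => d1.boolean ∧ d2.boolean

/-- The action `{f ← n}` assigning `n` to `f` and undefined elsewhere. -/
def singleAct (f : F) (n : ℕ) : Act F := fun f' => if f' = f then some n else none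

/-- Iteration used to compile Kleene star: `e₀ = {⊥}` and `e_{i+1} = {⊥} ⊕ (d ⊙ e_i)`. -/
noncomputable def starIter (d : FDD F) : ℕ → FDD F
  | 0 => .const {emptyAct}
  | i+1 => fddUnion (.const {emptyAct}) (fddSeq d (starIter d i))

/-- The compilation relation between (dup-free) NetKAT programs and FDDs. -/
inductive Compiles : Pol F → FDD F → Prop where
  | drop : Compiles (.filter .drop) (.const ∅)
  | id : Compiles (.filter .id) (.const {emptyAct})
  | mod (f : F) (n : ℕ) : Compiles (.mod f n) (.const {singleAct f n})
  | test (f : F) (n : ℕ) :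
      Compiles (.filter (.test f n)) (.cond f n (.const {emptyAct}) (.const ∅))
  | not {a : Pred F} {d : FDD F} :
      Compiles (.filter a) d → Compiles (.filter (.not a)) (fddNeg d)
  | por {a b : Pred F} {d1 d2 : FDD F} :
      Compiles (.filter a) d1 → Compiles (.filter b) d2 →
      Compiles (.filter (.or a b)) (fddUnion d1 d2)
  | pand {a b : Pred F} {d1 d2 : FDD F} :
      Compiles (.filter a) d1 → Compiles (.filter b) d2 →
      Compiles (.filter (.and a b)) (fddSeq d1 d2)
  | union {p q : Pol F} {d1 d2 : FDD F} :
      Compiles p d1 → Compiles q d2 → Compiles (.union p q) (fddUnion d1 d2)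
  | seq {p q : Pol F} {d1 d2 : FDD F} :
      Compiles p d1 → Compiles q d2 → Compiles (.seq p q) (fddSeq d1 d2)
  | star {p : Pol F} {d : FDD F} {N : ℕ} :
      Compiles p d → starIter d (N + 1) = starIter d N →
      Compiles (.star p) (starIter d N)


section Lemmas

@[simp] lemma applyAct_empty (pk : Packet F) : applyAct emptyAct pk = pk := rfl

@[simp] lemma actSem_empty (h : Hist F) : actSem (emptyAct : Act F) h = {h} := by
  simp [actSem]

@[simp] lemma fddSem_const (s : Finset (Act F)) (h : Hist F) :
    fddSem (.const s) h = ⋃ a ∈ s, actSem a h := rfl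

lemma fddUnion_sem (d1 d2 : FDD F) (h : Hist F) :
    fddSem (fddUnion d1 d2) h = fddSem d1 h ∪ fddSem d2 h := by
  induction d1, d2 using fddUnion.induct with
  | case1 s1 s2 =>
      rw [fddUnion]
      simp only [fddSem_const, Finset.set_biUnion_union]
  | case2 f n d1 d2 s ih1 ih2 =>
      rw [fddUnion]
      by_cases hc : h.1 f = n <;> simp [fddSem, hc, ih1, ih2]
  | case3 s f n d1 d2 ih1 ih2 =>
      rw [fddUnion]
      by_cases hc : h.1 f = n <;>
        simp [fddSem, hc, ih1, ih2, Set.union_comm, Set.union_assoc] <;>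
        (ext x; simp; tauto)
  | case4 d11 d12 f n d21 d22 ih1 ih2 =>
      rw [fddUnion]; simp only [if_pos rfl]
      by_cases hc : h.1 f = n <;> simp [fddSem, hc, ih1, ih2]
  | case5 n1 d11 d12 f n2 d21 d22 hn hlt ih1 ih2 =>
      rw [fddUnion]; simp only [if_pos rfl, if_neg hn, if_pos hlt]
      by_cases hc1 : h.1 f = n1
      · have hc2 : ¬ h.1 f = n2 := by rw [hc1]; exact hn
        simp [fddSem, hc1, hc2, ih1, ih2, hn, Ne.symm hn]
      · by_cases hc2 : h.1 f = n2 <;> simp [fddSem, hc1, hc2, ih1, ih2, hn, Ne.symm hn]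
  | case6 n1 d11 d12 f n2 d21 d22 hn hlt ih1 ih2 =>
      rw [fddUnion]; simp only [if_pos rfl, if_neg hn, if_neg hlt]
      by_cases hc2 : h.1 f = n2
      · have hc1 : ¬ h.1 f = n1 := by rw [hc2]; intro e; exact hn e.symm
        simp [fddSem, hc1, hc2, ih1, ih2, hn, Ne.symm hn, Set.union_comm]
      · by_cases hc1 : h.1 f = n1 <;> simp [fddSem, hc1, hc2, ih1, ih2, hn, Ne.symm hn]
  | case7 f1 n1 d11 d12 f2 n2 d21 d22 hf hlt ih1 ih2 =>
      rw [fddUnion]; simp only [if_neg hf, if_pos hlt]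
      by_cases hc1 : h.1 f1 = n1 <;> simp [fddSem, hc1, ih1, ih2]
  | case8 f1 n1 d11 d12 f2 n2 d21 d22 hf hlt ih1 ih2 =>
      rw [fddUnion]; simp only [if_neg hf, if_neg hlt]
      by_cases hc2 : h.1 f2 = n2 <;> simp [fddSem, hc2, ih1, ih2]

lemma restrictPos_sem (f : F) (n : ℕ) (d : FDD F) (h : Hist F) :
    fddSem (restrictPos f n d) h = if h.1 f = n then fddSem d h else ∅ := by
  induction d with
  | const s => rw [restrictPos]; by_cases hc : h.1 f = n <;> simp [fddSem, hc]
  | cond f1 n1 d1 d2 ih1 ih2 =>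
      rw [restrictPos]
      by_cases hf : f1 = f
      · subst hf
        by_cases hn : n1 = n
        · subst hn
          by_cases hc : h.1 f1 = n1 <;> simp [fddSem, hc]
        · simp only [if_pos rfl, if_neg hn]
          by_cases hc : h.1 f1 = n <;> simp [fddSem, ih2, hc, hn, Ne.symm hn]
      · by_cases hlt : f < f1
        · simp only [if_neg hf, if_pos hlt]
          by_cases hc : h.1 f = n <;> simp [fddSem, hc]
        · simp only [if_neg hf, if_neg hlt, fddSem, ih1, ih2]
          by_cases hc1 : h.1 f1 = n1 <;> by_cases hc : h.1 f = n <;> simp [fddSem, hc1, hc]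

lemma restrictNeg_sem (f : F) (n : ℕ) (d : FDD F) (h : Hist F) :
    fddSem (restrictNeg f n d) h = if h.1 f = n then ∅ else fddSem d h := by
  induction d with
  | const s => rw [restrictNeg]; by_cases hc : h.1 f = n <;> simp [fddSem, hc]
  | cond f1 n1 d1 d2 ih1 ih2 =>
      rw [restrictNeg]
      by_cases hf : f1 = f
      · subst hf
        by_cases hn : n1 = n
        · subst hn
          by_cases hc : h.1 f1 = n1 <;> simp [fddSem, hc]
        · simp only [if_pos rfl, if_neg hn]
          by_cases hc1 : h.1 f1 = n1
          · have hcn : ¬ h.1 f1 = n := by rw [hc1]; exact hn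
            simp [fddSem, hc1, hcn, hn]
          · simp [fddSem, hc1, ih2]
      · by_cases hlt : f < f1
        · simp only [if_neg hf, if_pos hlt]
          by_cases hc : h.1 f = n <;> simp [fddSem, hc]
        · simp only [if_neg hf, if_neg hlt, fddSem, ih1, ih2]
          by_cases hc1 : h.1 f1 = n1 <;> by_cases hc : h.1 f = n <;> simp [fddSem, hc1, hc]

lemma applyAct_actSeq (a a' : Act F) (pk : Packet F) :
    applyAct (actSeq a a') pk = applyAct a' (applyAct a pk) := by
  funext f
  simp only [applyAct, actSeq]
  cases a' f <;> rfl

lemma actSeqFDD_sem (a : Act F) (d : FDD F) (h : Hist F) :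
    fddSem (actSeqFDD a d) h = fddSem d (applyAct a h.1, h.2) := by
  induction d with
  | const s =>
      rw [actSeqFDD]
      ext x
      simp [fddSem, actSem, applyAct_actSeq]
  | cond f n d1 d2 ih1 ih2 =>
      rw [actSeqFDD]
      rcases ha : a f with _ | m
      · have : applyAct a h.1 f = h.1 f := by simp [applyAct, ha]
        by_cases hc : h.1 f = n <;> simp [fddSem, hc, this, ih1, ih2]
      · have : applyAct a h.1 f = m := by simp [applyAct, ha]
        by_cases hm : m = n <;> simp [fddSem, hm, this, ih1, ih2]

lemma foldr_union_sem (l : List (FDD F)) (h : Hist F) :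
    fddSem (l.foldr fddUnion (.const ∅)) h = ⋃ e ∈ l, fddSem e h := by
  induction l with
  | nil => simp [fddSem]
  | cons x xs ih => simp [List.foldr, fddUnion_sem, ih]

lemma fddSeq_sem (d1 d2 : FDD F) (h : Hist F) :
    fddSem (fddSeq d1 d2) h = ⋃ h' ∈ fddSem d1 h, fddSem d2 h' := by
  induction d1 with
  | const s =>
      rw [fddSeq, foldr_union_sem]
      ext x
      simp [fddSem, actSem, actSeqFDD_sem]
  | cond f n e1 e2 ih1 ih2 =>
      rw [fddSeq, fddUnion_sem, restrictPos_sem, restrictNeg_sem, ih1, ih2]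
      by_cases hc : h.1 f = n <;> simp [fddSem, hc]

lemma boolean_fddUnion {d1 d2 : FDD F} (h1 : d1.boolean) (h2 : d2.boolean) :
    (fddUnion d1 d2).boolean := by
  induction d1, d2 using fddUnion.induct with
  | case1 s1 s2 =>
      rw [fddUnion]
      rcases h1 with h1 | h1 <;> rcases h2 with h2 | h2 <;>
        subst h1 <;> subst h2 <;> simp [FDD.boolean]
  | case2 f n d1 d2 s ih1 ih2 =>
      rw [fddUnion]; exact ⟨ih1 h1.1 h2, ih2 h1.2 h2⟩
  | case3 s f n d1 d2 ih1 ih2 =>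
      rw [fddUnion]; exact ⟨ih1 h1 h2.1, ih2 h1 h2.2⟩
  | case4 d11 d12 f n d21 d22 ih1 ih2 =>
      rw [fddUnion]; simp only [if_pos rfl]
      exact ⟨ih1 h1.1 h2.1, ih2 h1.2 h2.2⟩
  | case5 n1 d11 d12 f n2 d21 d22 hn hlt ih1 ih2 =>
      rw [fddUnion]; simp only [if_pos rfl, if_neg hn, if_pos hlt]
      exact ⟨ih1 h1.1 h2.2, ih2 h1.2 h2⟩
  | case6 n1 d11 d12 f n2 d21 d22 hn hlt ih1 ih2 =>
      rw [fddUnion]; simp only [if_pos rfl, if_neg hn, if_neg hlt]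
      exact ⟨ih1 h1.2 h2.1, ih2 h1 h2.2⟩
  | case7 f1 n1 d11 d12 f2 n2 d21 d22 hf hlt ih1 ih2 =>
      rw [fddUnion]; simp only [if_neg hf, if_pos hlt]
      exact ⟨ih1 h1.1 h2, ih2 h1.2 h2⟩
  | case8 f1 n1 d11 d12 f2 n2 d21 d22 hf hlt ih1 ih2 =>
      rw [fddUnion]; simp only [if_neg hf, if_neg hlt]
      exact ⟨ih1 h1 h2.1, ih2 h1 h2.2⟩

lemma boolean_restrictPos {d : FDD F} (f : F) (n : ℕ) (hd : d.boolean) :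
    (restrictPos f n d).boolean := by
  induction d with
  | const s => rw [restrictPos]; exact ⟨hd, Or.inl rfl⟩
  | cond f1 n1 d1 d2 ih1 ih2 =>
      rw [restrictPos]
      by_cases hf : f1 = f
      · by_cases hn : n1 = n
        · simp only [if_pos hf, if_pos hn]; exact ⟨hd.1, Or.inl rfl⟩
        · simp only [if_pos hf, if_neg hn]; exact ih2 hd.2
      · by_cases hlt : f < f1
        · simp only [if_neg hf, if_pos hlt]; exact ⟨hd, Or.inl rfl⟩
        · simp only [if_neg hf, if_neg hlt]; exact ⟨ih1 hd.1, ih2 hd.2⟩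

lemma boolean_restrictNeg {d : FDD F} (f : F) (n : ℕ) (hd : d.boolean) :
    (restrictNeg f n d).boolean := by
  induction d with
  | const s => rw [restrictNeg]; exact ⟨Or.inl rfl, hd⟩
  | cond f1 n1 d1 d2 ih1 ih2 =>
      rw [restrictNeg]
      by_cases hf : f1 = f
      · by_cases hn : n1 = n
        · simp only [if_pos hf, if_pos hn]; exact ⟨Or.inl rfl, hd.2⟩
        · simp only [if_pos hf, if_neg hn]; exact ⟨hd.1, ih2 hd.2⟩
      · by_cases hlt : f < f1
        · simp only [if_neg hf, if_pos hlt]; exact ⟨Or.inl rfl, hd⟩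
        · simp only [if_neg hf, if_neg hlt]; exact ⟨ih1 hd.1, ih2 hd.2⟩

lemma actSeq_empty_left (b : Act F) : actSeq emptyAct b = b := by
  funext f; cases hb : b f <;> simp [actSeq, emptyAct, hb, Option.orElse]

lemma boolean_actSeqFDD_empty {d : FDD F} (hd : d.boolean) :
    (actSeqFDD emptyAct d).boolean := by
  induction d with
  | const s =>
      rw [actSeqFDD]
      have : s.image (actSeq emptyAct) = s := by
        have h : actSeq (emptyAct : Act F) = id := funext actSeq_empty_left
        rw [h, Finset.image_id]
      rw [this]; exact hd
  | cond f n d1 d2 ih1 ih2 =>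
      show FDD.boolean (.cond f n (actSeqFDD emptyAct d1) (actSeqFDD emptyAct d2))
      exact ⟨ih1 hd.1, ih2 hd.2⟩

lemma boolean_fddSeq {d1 d2 : FDD F} (h1 : d1.boolean) (h2 : d2.boolean) :
    (fddSeq d1 d2).boolean := by
  induction d1 with
  | const s =>
      rw [fddSeq]
      rcases h1 with h1 | h1 <;> subst h1
      · simp [FDD.boolean]
      · rw [Finset.toList_singleton]
        simp only [List.map_cons, List.map_nil, List.foldr]
        exact boolean_fddUnion (boolean_actSeqFDD_empty h2) (Or.inl rfl)
  | cond f n e1 e2 ih1 ih2 =>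
      rw [fddSeq]
      exact boolean_fddUnion (boolean_restrictPos _ _ (ih1 h1.1))
        (boolean_restrictNeg _ _ (ih2 h1.2))

lemma boolean_fddNeg (d : FDD F) : (fddNeg d).boolean := by
  induction d with
  | const s =>
      rw [fddNeg]; by_cases hs : s = ∅ <;> simp [hs, FDD.boolean]
  | cond f n d1 d2 ih1 ih2 => exact ⟨ih1, ih2⟩

lemma compiles_boolean {p : Pol F} {d : FDD F} (hc : Compiles p d) :
    ∀ a : Pred F, p = .filter a → d.boolean := by
  induction hc with
  | drop => intro a _; exact Or.inl rfl
  | id => intro a _; exact Or.inr rfl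
  | mod f n => intro a ha; cases ha
  | test f n => intro a _; exact ⟨Or.inr rfl, Or.inl rfl⟩
  | not h ih => intro a _; exact boolean_fddNeg _
  | por h1 h2 ih1 ih2 =>
      intro a _; exact boolean_fddUnion (ih1 _ rfl) (ih2 _ rfl)
  | pand h1 h2 ih1 ih2 =>
      intro a _; exact boolean_fddSeq (ih1 _ rfl) (ih2 _ rfl)
  | union h1 h2 ih1 ih2 => intro a ha; cases ha
  | seq h1 h2 ih1 ih2 => intro a ha; cases ha
  | star h hs ih => intro a ha; cases ha

lemma fddNeg_sem {d : FDD F} (hd : d.boolean) (h : Hist F) :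
    fddSem (fddNeg d) h = {h} \ fddSem d h := by
  induction d with
  | const s =>
      rcases hd with hs | hs <;> subst hs <;> simp [fddNeg, fddSem, actSem]
  | cond f n d1 d2 ih1 ih2 =>
      rw [fddNeg]
      by_cases hc : h.1 f = n <;> simp [fddSem, hc, ih1 hd.1, ih2 hd.2]

lemma iterRel_congr {f g : Hist F → Set (Hist F)} (hfg : ∀ h, f h = g h) :
    ∀ (i : ℕ) (h : Hist F), iterRel f i h = iterRel g i h := by
  intro i
  induction i with
  | zero => intro h; rfl
  | succ i ih =>
      intro h
      simp only [iterRel, hfg h]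
      exact Set.iUnion₂_congr fun h' _ => ih h'

lemma starIter_sem (d : FDD F) (i : ℕ) (h : Hist F) :
    fddSem (starIter d i) h = ⋃ j, ⋃ (_ : j ≤ i), iterRel (fddSem d) j h := by
  induction i generalizing h with
  | zero =>
      rw [starIter]
      ext x
      simp [fddSem, actSem, iterRel, Nat.le_zero]
  | succ i ih =>
      rw [starIter, fddUnion_sem, fddSeq_sem]
      ext x
      simp only [Set.mem_union, Set.mem_iUnion, fddSem_const, actSem_empty,
        Finset.mem_singleton, Set.iUnion_iUnion_eq_left, Set.mem_singleton_iff, ih]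
      constructor
      · rintro (rfl | ⟨h', hh', j, hj, hx⟩)
        · exact ⟨0, Nat.zero_le _, rfl⟩
        · exact ⟨j + 1, Nat.succ_le_succ hj, by
            simp only [iterRel, Set.mem_iUnion]; exact ⟨h', hh', hx⟩⟩
      · rintro ⟨j, hj, hx⟩
        rcases j with _ | j
        · left; exact hx
        · right
          simp only [iterRel, Set.mem_iUnion] at hx
          obtain ⟨h', hh', hx⟩ := hx
          exact ⟨h', hh', j, Nat.le_of_succ_le_succ hj, hx⟩

lemma starIter_stable {d : FDD F} {N : ℕ}
    (hs : starIter d (N + 1) = starIter d N) :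
    ∀ k, starIter d (N + k) = starIter d N := by
  intro k
  induction k with
  | zero => rfl
  | succ k ih =>
      calc starIter d (N + (k + 1))
          = fddUnion (.const {emptyAct}) (fddSeq d (starIter d (N + k))) := rfl
        _ = fddUnion (.const {emptyAct}) (fddSeq d (starIter d N)) := by rw [ih]
        _ = starIter d N := hs


end Lemmas

/-- **Local Soundness (Theorem 1).** If a dup-free NetKAT program `p` compiles to the
FDD `d`, then for every history `h`, `⟦p⟧ h = ⟦d⟧ h`. -/
theorem local_soundness {p : Pol F} {d : FDD F}
    (hp : p.dupFree) (hc : Compiles p d) :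
    ∀ h : Hist F, polSem p h = fddSem d h := by
  clear hp
  induction hc with
  | drop => intro h; simp [polSem, predSem, fddSem]
  | id => intro h; simp [polSem, predSem, fddSem]
  | mod f n =>
      intro h
      have hupd : applyAct (singleAct f n) h.1 = Function.update h.1 f n := by
        funext f'
        by_cases hf : f' = f <;> simp [applyAct, singleAct, hf, Function.update]
      simp [polSem, fddSem, actSem, hupd]
  | test f n =>
      intro h
      by_cases hc : h.1 f = n <;> simp [polSem, predSem, fddSem, hc, actSem]
  | @not a d hcp ih =>
      intro h
      have hb := compiles_boolean hcp _ rfl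
      calc polSem (.filter (.not a)) h = {h} \ polSem (.filter a) h := rfl
        _ = {h} \ fddSem d h := by rw [ih h]
        _ = fddSem (fddNeg d) h := (fddNeg_sem hb h).symm
  | @por a b d1 d2 h1 h2 ih1 ih2 =>
      intro h
      calc polSem (.filter (.or a b)) h
          = polSem (.filter a) h ∪ polSem (.filter b) h := rfl
        _ = fddSem d1 h ∪ fddSem d2 h := by rw [ih1 h, ih2 h]
        _ = fddSem (fddUnion d1 d2) h := (fddUnion_sem _ _ _).symm
  | @pand a b d1 d2 h1 h2 ih1 ih2 =>
      intro h
      calc polSem (.filter (.and a b)) h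
          = ⋃ h' ∈ polSem (.filter a) h, polSem (.filter b) h' := rfl
        _ = ⋃ h' ∈ fddSem d1 h, fddSem d2 h' := by
            rw [ih1 h]; exact Set.iUnion₂_congr fun h' _ => ih2 h'
        _ = fddSem (fddSeq d1 d2) h := (fddSeq_sem _ _ _).symm
  | @union p q d1 d2 h1 h2 ih1 ih2 =>
      intro h
      calc polSem (.union p q) h = polSem p h ∪ polSem q h := rfl
        _ = fddSem d1 h ∪ fddSem d2 h := by rw [ih1 h, ih2 h]
        _ = fddSem (fddUnion d1 d2) h := (fddUnion_sem _ _ _).symm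
  | @seq p q d1 d2 h1 h2 ih1 ih2 =>
      intro h
      calc polSem (.seq p q) h = ⋃ h' ∈ polSem p h, polSem q h' := rfl
        _ = ⋃ h' ∈ fddSem d1 h, fddSem d2 h' := by
            rw [ih1 h]; exact Set.iUnion₂_congr fun h' _ => ih2 h'
        _ = fddSem (fddSeq d1 d2) h := (fddSeq_sem _ _ _).symm
  | @star p d N hcp hstab ih =>
      intro h
      have hiter : ∀ (i : ℕ) (h : Hist F),
          iterRel (fun h' => polSem p h') i h = iterRel (fddSem d) i h :=
        iterRel_congr ih
      ext x
      simp only [polSem, Set.mem_iUnion, starIter_sem]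
      constructor
      · rintro ⟨i, hx⟩
        rw [hiter] at hx
        have h1 : x ∈ fddSem (starIter d (N + i)) h := by
          rw [starIter_sem]
          exact Set.mem_iUnion.2 ⟨i, Set.mem_iUnion.2 ⟨Nat.le_add_left i N, hx⟩⟩
        rw [starIter_stable hstab i, starIter_sem] at h1
        simpa using h1
      · rintro ⟨j, hj, hx⟩
        rw [← hiter] at hx
        exact ⟨j, hx⟩


end NetKAT
end

section
/- Soundness of positive FDD restriction: for every FDD d, field f, value n, packet pk, and list of packets h, ⟦d|_{f=n}⟧ (pk::h) equals ⟦d⟧ (pk::h) if pk f = n, and equals ∅ otherwise. -/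
namespace NetKAT

variable {F : Type} [Fintype F] [LinearOrder F]

theorem fddSem_const_empty {F : Type} (h : Hist F) : fddSem (.const ∅) h = ∅ := by
  simp only [fddSem, Finset.notMem_empty, Set.iUnion_of_empty, Set.iUnion_empty]

theorem fddSem_cond_of_eq {F : Type} {f : F} {n : ℕ} {d₁ d₂ : FDD F} {h : Hist F}
    (hf : h.1 f = n) : fddSem (.cond f n d₁ d₂) h = fddSem d₁ h :=
  if_pos hf

theorem fddSem_cond_of_ne {F : Type} {f : F} {n : ℕ} {d₁ d₂ : FDD F} {h : Hist F}
    (hf : h.1 f ≠ n) : fddSem (.cond f n d₁ d₂) h = fddSem d₂ h :=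
  if_neg hf

theorem fddSem_restrictPos_of_eq {F : Type} [LinearOrder F] {f : F} {n : ℕ}
    {pk : Packet F} {h : List (Packet F)} (hpk : pk f = n) (d : FDD F) :
    fddSem (restrictPos f n d) (pk, h) = fddSem d (pk, h) := by
  induction d with
  | const s => exact fddSem_cond_of_eq hpk
  | cond f₁ n₁ d₁ d₂ ih₁ ih₂ =>
    rw [restrictPos]
    split_ifs with hf hn
    · subst hf hn
      rw [fddSem_cond_of_eq hpk, fddSem_cond_of_eq hpk]
    · subst hf
      rw [ih₂, fddSem_cond_of_ne (by simpa [hpk] using Ne.symm hn)]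
    · exact fddSem_cond_of_eq hpk
    · by_cases hpk₁ : pk f₁ = n₁
      · rw [fddSem_cond_of_eq hpk₁, fddSem_cond_of_eq hpk₁, ih₁]
      · rw [fddSem_cond_of_ne hpk₁, fddSem_cond_of_ne hpk₁, ih₂]

theorem fddSem_restrictPos_of_ne {F : Type} [LinearOrder F] {f : F} {n : ℕ}
    {pk : Packet F} {h : List (Packet F)} (hpk : pk f ≠ n) (d : FDD F) :
    fddSem (restrictPos f n d) (pk, h) = ∅ := by
  induction d with
  | const s => rw [restrictPos, fddSem_cond_of_ne hpk, fddSem_const_empty]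
  | cond f₁ n₁ d₁ d₂ ih₁ ih₂ =>
    rw [restrictPos]
    split_ifs
    · rw [fddSem_cond_of_ne hpk, fddSem_const_empty]
    · exact ih₂
    · rw [fddSem_cond_of_ne hpk, fddSem_const_empty]
    · by_cases hpk₁ : pk f₁ = n₁
      · rw [fddSem_cond_of_eq hpk₁, ih₁]
      · rw [fddSem_cond_of_ne hpk₁, ih₂]

/-- **Soundness of positive FDD restriction.** -/
theorem restrictPos_sound (d : FDD F) (f : F) (n : ℕ)
    (pk : Packet F) (h : List (Packet F)) :
    fddSem (restrictPos f n d) (pk, h) =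
      if pk f = n then fddSem d (pk, h) else ∅ := by
  split_ifs with hpk
  · exact fddSem_restrictPos_of_eq hpk d
  · exact fddSem_restrictPos_of_ne hpk d

end NetKAT
end

section
/- Soundness of negative FDD restriction: for every FDD d, field f, value n, packet pk, and list of packets h, ⟦d|_{f≠n}⟧ (pk::h) equals ∅ if pk f = n, and equals ⟦d⟧ (pk::h) otherwise. -/
namespace NetKAT

variable {F : Type} [Fintype F] [LinearOrder F]

/-- **Soundness of negative FDD restriction.** -/
theorem restrictNeg_sound (d : FDD F) (f : F) (n : ℕ)
    (pk : Packet F) (h : List (Packet F)) :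
    fddSem (restrictNeg f n d) (pk, h) =
      if pk f = n then ∅ else fddSem d (pk, h) := by
  induction d with
  | const s => simp [restrictNeg, fddSem]
  | cond f₁ n₁ d₁ d₂ ih₁ ih₂ =>
    by_cases hf : f₁ = f
    · subst hf
      by_cases hn : n₁ = n
      · subst hn
        by_cases hpk : pk f₁ = n₁ <;> simp [restrictNeg, fddSem, hpk]
      · -- a packet taking the branch `f₁ = n₁` already satisfies `f₁ ≠ n`
        by_cases hpk : pk f₁ = n₁
        · simp [restrictNeg, fddSem, hn, hpk]
        · simp [restrictNeg, fddSem, hn, hpk, ih₂]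
    · by_cases hlt : f < f₁
      · simp [restrictNeg, fddSem, hf, hlt]
      · simp only [restrictNeg, fddSem, hf, hlt, if_false, ih₁, ih₂]
        split_ifs <;> rfl

end NetKAT
end

section
/- Soundness of FDD negation: for every boolean FDD d and every history h, ⟦¬d⟧ h = {h} ∖ ⟦d⟧ h. -/
namespace NetKAT

variable {F : Type} [Fintype F] [LinearOrder F]

/-- **Soundness of FDD negation.** For every boolean FDD `d` and every history `h`,
`⟦¬d⟧ h = {h} \ ⟦d⟧ h`. -/
theorem fddNeg_sound (d : FDD F) (hd : d.boolean) (h : Hist F) :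
    fddSem (fddNeg d) h = {h} \ fddSem d h := by
  induction d with
  | const s =>
    have key : (applyAct emptyAct h.1, h.2) = h := by
      have : applyAct emptyAct h.1 = h.1 := funext fun f => rfl
      rw [this]
    have hact : fddSem (FDD.const ({emptyAct} : Finset (Act F))) h = {h} := by
      simp [fddSem, actSem, key]
    rcases hd with rfl | rfl
    · simp [fddNeg, fddSem, actSem, key]
    · have hne : ({emptyAct} : Finset (Act F)) ≠ ∅ := by simp
      simp [fddNeg, hne, fddSem, actSem, key]
  | cond f n d1 d2 ih1 ih2 =>
    obtain ⟨h1, h2⟩ := hd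
    simp only [fddNeg, fddSem]
    split <;> [exact ih1 h1; exact ih2 h2]

end NetKAT
end

section
/- Uniform stabilization of Kleene star for dup-free programs: for every dup-free NetKAT program p there exists N ∈ ℕ such that for every history h, ⟦p*⟧ h = ⋃_{i ≤ N} F_p^i h (so the fixed-point iteration defining star converges after finitely many steps, uniformly in the input history). -/
namespace NetKAT

variable {F : Type} [Fintype F] [LinearOrder F]

set_option linter.unusedSectionVars false

/-! ### Auxiliary development for `star_stabilizes` -/

/-- The set of values a predicate mentions is contained in `V`. -/
def Pred.valsIn (V : Finset ℕ) : Pred F → Prop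
  | .id => True
  | .drop => True
  | .test _ n => n ∈ V
  | .or a b => a.valsIn V ∧ b.valsIn V
  | .and a b => a.valsIn V ∧ b.valsIn V
  | .not a => a.valsIn V

/-- The set of values a program mentions is contained in `V`. -/
def Pol.valsIn (V : Finset ℕ) : Pol F → Prop
  | .filter a => a.valsIn V
  | .mod _ n => n ∈ V
  | .union p q => p.valsIn V ∧ q.valsIn V
  | .seq p q => p.valsIn V ∧ q.valsIn V
  | .star p => p.valsIn V
  | .dup => True

lemma Pred.valsIn_mono {V W : Finset ℕ} (hVW : V ⊆ W) :
    ∀ {a : Pred F}, a.valsIn V → a.valsIn W := by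
  intro a
  induction a with
  | id => intro; trivial
  | drop => intro; trivial
  | test f n => exact fun h => hVW h
  | or a b iha ihb => exact fun h => ⟨iha h.1, ihb h.2⟩
  | and a b iha ihb => exact fun h => ⟨iha h.1, ihb h.2⟩
  | not a iha => exact fun h => iha h

lemma Pol.valsIn_mono {V W : Finset ℕ} (hVW : V ⊆ W) :
    ∀ {p : Pol F}, p.valsIn V → p.valsIn W := by
  intro p
  induction p with
  | filter a => exact fun h => Pred.valsIn_mono hVW h
  | mod f n => exact fun h => hVW h
  | union p q ihp ihq => exact fun h => ⟨ihp h.1, ihq h.2⟩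
  | seq p q ihp ihq => exact fun h => ⟨ihp h.1, ihq h.2⟩
  | star p ihp => exact fun h => ihp h
  | dup => intro; trivial

lemma Pred.exists_valsIn (a : Pred F) : ∃ V : Finset ℕ, a.valsIn V := by
  induction a with
  | id => exact ⟨∅, trivial⟩
  | drop => exact ⟨∅, trivial⟩
  | test f n => exact ⟨{n}, Finset.mem_singleton_self n⟩
  | or a b iha ihb =>
    obtain ⟨V1, h1⟩ := iha; obtain ⟨V2, h2⟩ := ihb
    exact ⟨V1 ∪ V2, Pred.valsIn_mono Finset.subset_union_left h1,
      Pred.valsIn_mono Finset.subset_union_right h2⟩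
  | and a b iha ihb =>
    obtain ⟨V1, h1⟩ := iha; obtain ⟨V2, h2⟩ := ihb
    exact ⟨V1 ∪ V2, Pred.valsIn_mono Finset.subset_union_left h1,
      Pred.valsIn_mono Finset.subset_union_right h2⟩
  | not a iha => exact iha

lemma Pol.exists_valsIn (p : Pol F) : ∃ V : Finset ℕ, p.valsIn V := by
  induction p with
  | filter a => exact a.exists_valsIn
  | mod f n => exact ⟨{n}, Finset.mem_singleton_self n⟩
  | union p q ihp ihq =>
    obtain ⟨V1, h1⟩ := ihp; obtain ⟨V2, h2⟩ := ihq
    exact ⟨V1 ∪ V2, Pol.valsIn_mono Finset.subset_union_left h1,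
      Pol.valsIn_mono Finset.subset_union_right h2⟩
  | seq p q ihp ihq =>
    obtain ⟨V1, h1⟩ := ihp; obtain ⟨V2, h2⟩ := ihq
    exact ⟨V1 ∪ V2, Pol.valsIn_mono Finset.subset_union_left h1,
      Pol.valsIn_mono Finset.subset_union_right h2⟩
  | star p ihp => exact ihp
  | dup => exact ⟨∅, trivial⟩

/-- Abstract actions with values in `V`. -/
abbrev AAct (F : Type) (V : Finset ℕ) := F → Option {n : ℕ // n ∈ V}

/-- Realize an abstract action as a concrete action. -/
def areal {V : Finset ℕ} (α : AAct F V) : Act F := fun f => (α f).map Subtype.val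

/-- The profile of a packet relative to `V`. -/
def aprof (V : Finset ℕ) (pk : Packet F) : AAct F V :=
  fun f => if h : pk f ∈ V then some ⟨pk f, h⟩ else none

/-- Composition of abstract actions (`β` after `α`). -/
def acomp {V : Finset ℕ} (α β : AAct F V) : AAct F V :=
  fun f => (β f).orElse (fun _ => α f)

/-- The empty abstract action. -/
def abot (V : Finset ℕ) : AAct F V := fun _ => none

lemma applyAct_abot (pk : Packet F) {V : Finset ℕ} :
    applyAct (areal (abot V : AAct F V)) pk = pk := by
  funext f; simp [applyAct, areal, abot]

lemma applyAct_acomp {V : Finset ℕ} (α β : AAct F V) (pk : Packet F) :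
    applyAct (areal (acomp α β)) pk = applyAct (areal β) (applyAct (areal α) pk) := by
  funext f
  cases hβ : β f <;> simp [applyAct, areal, acomp, hβ, Option.orElse]

lemma aprof_applyAct {V : Finset ℕ} (α : AAct F V) (pk : Packet F) :
    aprof V (applyAct (areal α) pk) = acomp (aprof V pk) α := by
  funext f
  cases hα : α f with
  | none => simp [aprof, applyAct, areal, acomp, hα, Option.orElse]
  | some v =>
    have h1 : applyAct (areal α) pk f = v.val := by simp [applyAct, areal, hα]
    simp [aprof, acomp, hα, Option.orElse, h1, v.2]

/-- A packet-processing function is representable by a finite action table over `V`. -/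
def Rep (V : Finset ℕ) (sem : Hist F → Set (Hist F)) : Prop :=
  ∃ δ : AAct F V → Finset (AAct F V),
    ∀ (pk : Packet F) (t : List (Packet F)),
      sem (pk, t) = ⋃ α ∈ (δ (aprof V pk) : Finset (AAct F V)),
        {(applyAct (areal α) pk, t)}

lemma pred_rep (V : Finset ℕ) (a : Pred F) (ha : a.valsIn V) :
    ∃ g : AAct F V → Bool, ∀ (pk : Packet F) (t : List (Packet F)),
      predSem a (pk, t) = if g (aprof V pk) then {(pk, t)} else (∅ : Set (Hist F)) := by
  induction a with
  | id => exact ⟨fun _ => true, fun pk t => by simp [predSem]⟩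
  | drop => exact ⟨fun _ => false, fun pk t => by simp [predSem]⟩
  | test f n =>
    replace ha : n ∈ V := ha
    refine ⟨fun ρ => decide (ρ f = some ⟨n, ha⟩), fun pk t => by
      have hiff : (pk f = n) ↔ (aprof V pk f = some ⟨n, ha⟩) := by
        constructor
        · intro h; simp [aprof, h, ha]
        · intro h
          by_cases hm : pk f ∈ V
          · simp only [aprof, dif_pos hm, Option.some.injEq, Subtype.mk.injEq] at h
            exact h
          · simp [aprof, dif_neg hm] at h
      simp only [predSem]
      by_cases h : pk f = n
      · rw [if_pos h, if_pos (by simp [hiff.mp h])]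
      · rw [if_neg h, if_neg (by simp; exact fun hc => h (hiff.mpr hc))]⟩
  | or a b iha ihb =>
    obtain ⟨g1, h1⟩ := iha ha.1
    obtain ⟨g2, h2⟩ := ihb ha.2
    refine ⟨fun ρ => g1 ρ || g2 ρ, fun pk t => ?_⟩
    simp only [predSem, h1, h2]
    by_cases hg1 : g1 (aprof V pk) = true <;> by_cases hg2 : g2 (aprof V pk) = true <;>
      simp [hg1, hg2]
  | and a b iha ihb =>
    obtain ⟨g1, h1⟩ := iha ha.1
    obtain ⟨g2, h2⟩ := ihb ha.2
    refine ⟨fun ρ => g1 ρ && g2 ρ, fun pk t => ?_⟩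
    simp only [predSem, h1]
    by_cases hg1 : g1 (aprof V pk) = true <;> simp [hg1, h2]
  | not a iha =>
    obtain ⟨g, h⟩ := iha ha
    refine ⟨fun ρ => !g ρ, fun pk t => ?_⟩
    simp only [predSem, h]
    by_cases hg : g (aprof V pk) = true <;> simp [hg]

/-- One step of the abstract star iteration. -/
def astep (V : Finset ℕ) (δ : AAct F V → Finset (AAct F V))
    (E : AAct F V → Finset (AAct F V)) : AAct F V → Finset (AAct F V) :=
  fun ρ => insert (abot V) ((δ ρ).biUnion fun α => ((E (acomp ρ α)).image (acomp α)))

/-- Iterates of the abstract star iteration. -/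
def aiter (V : Finset ℕ) (δ : AAct F V → Finset (AAct F V)) :
    ℕ → AAct F V → Finset (AAct F V)
  | 0 => fun _ => {abot V}
  | i + 1 => astep V δ (aiter V δ i)

lemma aiter_mono (V : Finset ℕ) (δ : AAct F V → Finset (AAct F V)) :
    ∀ i (ρ : AAct F V), aiter V δ i ρ ⊆ aiter V δ (i + 1) ρ := by
  intro i
  induction i with
  | zero =>
    intro ρ x hx
    simp only [aiter, Finset.mem_singleton] at hx
    simp [aiter, astep, hx]
  | succ i ih =>
    intro ρ x hx
    rw [show aiter V δ (i+1+1) = astep V δ (aiter V δ (i+1)) from rfl]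
    rw [show aiter V δ (i+1) = astep V δ (aiter V δ i) from rfl] at hx
    unfold astep at hx ⊢
    simp only [Finset.mem_insert, Finset.mem_biUnion, Finset.mem_image] at hx ⊢
    rcases hx with h | ⟨α, hα, β, hβ, hx⟩
    · exact Or.inl h
    · exact Or.inr ⟨α, hα, β, ih _ hβ, hx⟩

lemma aiter_mono' (V : Finset ℕ) (δ : AAct F V → Finset (AAct F V)) {i j : ℕ} (hij : i ≤ j) :
    ∀ ρ : AAct F V, aiter V δ i ρ ⊆ aiter V δ j ρ := by
  induction j, hij using Nat.le_induction with
  | base => exact fun ρ => subset_rfl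
  | succ j hj ih => exact fun ρ => (ih ρ).trans (aiter_mono V δ j ρ)

lemma aiter_stab (V : Finset ℕ) (δ : AAct F V → Finset (AAct F V)) :
    ∃ N, ∀ i, N ≤ i → aiter V δ i = aiter V δ N := by
  -- the cardinality measure
  set m : ℕ → ℕ := fun i => ∑ ρ : AAct F V, (aiter V δ i ρ).card with hm
  have hmle : ∀ i, m i ≤ m (i + 1) := fun i =>
    Finset.sum_le_sum fun ρ _ => Finset.card_le_card (aiter_mono V δ i ρ)
  have hbound : ∀ i, m i ≤ Fintype.card (AAct F V) * Fintype.card (AAct F V) := by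
    intro i
    calc m i ≤ ∑ _ρ : AAct F V, Fintype.card (AAct F V) :=
          Finset.sum_le_sum fun ρ _ => Finset.card_le_univ _
      _ = Fintype.card (AAct F V) * Fintype.card (AAct F V) := by
          simp [Finset.sum_const, Finset.card_univ, mul_comm]
  have hexm : ∃ N, m (N + 1) = m N := by
    by_contra hc
    push_neg at hc
    have hsm : StrictMono m :=
      strictMono_nat_of_lt_succ fun i => lt_of_le_of_ne (hmle i) (Ne.symm (hc i))
    have h1 := hsm.le_apply (x := Fintype.card (AAct F V) * Fintype.card (AAct F V) + 1)
    have h2 := hbound (Fintype.card (AAct F V) * Fintype.card (AAct F V) + 1)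
    omega
  obtain ⟨N, hN⟩ := hexm
  have hfix : aiter V δ (N + 1) = aiter V δ N := by
    funext ρ
    refine (Finset.eq_of_subset_of_card_le (aiter_mono V δ N ρ) ?_).symm
    have heach : ∀ ρ ∈ (Finset.univ : Finset (AAct F V)),
        (aiter V δ N ρ).card = (aiter V δ (N+1) ρ).card := by
      rw [← Finset.sum_eq_sum_iff_of_le
        (fun ρ _ => Finset.card_le_card (aiter_mono V δ N ρ))]
      exact hN.symm
    exact le_of_eq (heach ρ (Finset.mem_univ ρ)).symm
  refine ⟨N, ?_⟩
  intro i hi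
  induction i with
  | zero => have : N = 0 := by omega
            subst this; rfl
  | succ i ih =>
    rcases Nat.lt_or_ge N (i+1) with h | h
    · have hiN : N ≤ i := by omega
      have := ih hiN
      show astep V δ (aiter V δ i) = aiter V δ N
      rw [this]
      exact hfix
    · have : N = i + 1 := by omega
      subst this; rfl

lemma mem_aiter_succ {V : Finset ℕ} {δ : AAct F V → Finset (AAct F V)} {i : ℕ}
    {ρ x : AAct F V} :
    x ∈ aiter V δ (i + 1) ρ ↔
      x = abot V ∨ ∃ α ∈ δ ρ, ∃ β ∈ aiter V δ i (acomp ρ α), x = acomp α β := by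
  show x ∈ astep V δ (aiter V δ i) ρ ↔ _
  unfold astep
  simp only [Finset.mem_insert, Finset.mem_biUnion, Finset.mem_image]
  constructor
  · rintro (h | ⟨α, hα, β, hβ, rfl⟩)
    · exact Or.inl h
    · exact Or.inr ⟨α, hα, β, hβ, rfl⟩
  · rintro (h | ⟨α, hα, β, hβ, rfl⟩)
    · exact Or.inl h
    · exact Or.inr ⟨α, hα, β, hβ, rfl⟩

lemma aiter_rep (V : Finset ℕ) (sem : Hist F → Set (Hist F))
    (δ : AAct F V → Finset (AAct F V))
    (hδ : ∀ (pk : Packet F) (t : List (Packet F)),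
      sem (pk, t) = ⋃ α ∈ (δ (aprof V pk) : Finset (AAct F V)),
        {(applyAct (areal α) pk, t)}) :
    ∀ (i : ℕ) (pk : Packet F) (t : List (Packet F)),
      (⋃ j, ⋃ (_ : j ≤ i), iterRel sem j (pk, t)) =
        ⋃ α ∈ (aiter V δ i (aprof V pk) : Finset (AAct F V)),
          {(applyAct (areal α) pk, t)} := by
  intro i
  induction i with
  | zero =>
    intro pk t
    ext x
    simp [aiter, iterRel, Nat.le_zero, applyAct_abot]
  | succ i ih =>
    intro pk t
    have hsplit : (⋃ j, ⋃ (_ : j ≤ i + 1), iterRel sem j (pk, t)) =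
        {(pk, t)} ∪ ⋃ h' ∈ sem (pk, t), ⋃ j, ⋃ (_ : j ≤ i), iterRel sem j h' := by
      ext x
      simp only [Set.mem_iUnion, Set.mem_union, Set.mem_singleton_iff]
      constructor
      · rintro ⟨j, hj, hx⟩
        match j with
        | 0 => exact Or.inl hx
        | k + 1 =>
          right
          simp only [iterRel, Set.mem_iUnion] at hx
          obtain ⟨h', hh', hx⟩ := hx
          exact ⟨h', hh', k, by omega, hx⟩
      · rintro (hx | ⟨h', hh', k, hk, hx⟩)
        · exact ⟨0, by omega, hx⟩
        · exact ⟨k + 1, by omega, by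
            simp only [iterRel, Set.mem_iUnion]; exact ⟨h', hh', hx⟩⟩
    have hmid : (⋃ h' ∈ (⋃ α ∈ (δ (aprof V pk) : Finset (AAct F V)),
          ({(applyAct (areal α) pk, t)} : Set (Hist F))),
          ⋃ j, ⋃ (_ : j ≤ i), iterRel sem j h') =
        ⋃ α ∈ (δ (aprof V pk) : Finset (AAct F V)),
          ⋃ β ∈ (aiter V δ i (acomp (aprof V pk) α) : Finset (AAct F V)),
            ({(applyAct (areal (acomp α β)) pk, t)} : Set (Hist F)) := by
      ext x
      simp only [Set.mem_iUnion, Set.mem_singleton_iff]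
      constructor
      · rintro ⟨h', ⟨α, hα, rfl⟩, hx⟩
        have hx' : x ∈ ⋃ j, ⋃ (_ : j ≤ i),
            iterRel sem j (applyAct (areal α) pk, t) := by
          simp only [Set.mem_iUnion]; exact hx
        rw [ih, aprof_applyAct] at hx'
        simp only [Set.mem_iUnion, Set.mem_singleton_iff] at hx'
        obtain ⟨β, hβ, rfl⟩ := hx'
        exact ⟨α, hα, β, hβ, by rw [applyAct_acomp]⟩
      · rintro ⟨α, hα, β, hβ, rfl⟩
        have hx' : (applyAct (areal (acomp α β)) pk, t) ∈ ⋃ j, ⋃ (_ : j ≤ i),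
            iterRel sem j (applyAct (areal α) pk, t) := by
          rw [ih, aprof_applyAct]
          simp only [Set.mem_iUnion, Set.mem_singleton_iff]
          exact ⟨β, hβ, by rw [applyAct_acomp]⟩
        simp only [Set.mem_iUnion] at hx'
        obtain ⟨j, hj, hx'⟩ := hx'
        exact ⟨(applyAct (areal α) pk, t), ⟨α, hα, rfl⟩, j, hj, hx'⟩
    rw [hsplit, hδ pk t, hmid]
    ext x
    simp only [Set.mem_union, Set.mem_singleton_iff, Set.mem_iUnion]
    constructor
    · rintro (rfl | ⟨α, hα, β, hβ, rfl⟩)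
      · exact ⟨abot V, mem_aiter_succ.mpr (Or.inl rfl), by rw [applyAct_abot]⟩
      · exact ⟨acomp α β, mem_aiter_succ.mpr (Or.inr ⟨α, hα, β, hβ, rfl⟩), rfl⟩
    · rintro ⟨γ, hγ, rfl⟩
      rcases mem_aiter_succ.mp hγ with rfl | ⟨α, hα, β, hβ, rfl⟩
      · exact Or.inl (by rw [applyAct_abot])
      · exact Or.inr ⟨α, hα, β, hβ, rfl⟩

lemma star_core (V : Finset ℕ) (sem : Hist F → Set (Hist F)) (hrep : Rep V sem) :
    ∃ N : ℕ, (∀ (pk : Packet F) (t : List (Packet F)),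
        (⋃ i, iterRel sem i (pk, t)) = ⋃ j, ⋃ (_ : j ≤ N), iterRel sem j (pk, t)) ∧
      Rep V (fun h => ⋃ i, iterRel sem i h) := by
  obtain ⟨δ, hδ⟩ := hrep
  obtain ⟨N, hN⟩ := aiter_stab V δ
  have hrepN := aiter_rep V sem δ hδ
  have hsub : ∀ i (ρ : AAct F V), aiter V δ i ρ ⊆ aiter V δ N ρ := by
    intro i ρ
    rcases le_or_gt i N with h | h
    · exact aiter_mono' V δ h ρ
    · rw [hN i (le_of_lt h)]
  have hmain : ∀ (pk : Packet F) (t : List (Packet F)),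
      (⋃ i, iterRel sem i (pk, t)) = ⋃ j, ⋃ (_ : j ≤ N), iterRel sem j (pk, t) := by
    intro pk t
    apply Set.Subset.antisymm
    · intro x hx
      simp only [Set.mem_iUnion] at hx
      obtain ⟨i, hx⟩ := hx
      have hx' : x ∈ ⋃ j, ⋃ (_ : j ≤ i), iterRel sem j (pk, t) := by
        simp only [Set.mem_iUnion]; exact ⟨i, le_refl i, hx⟩
      rw [hrepN i] at hx'
      rw [hrepN N]
      simp only [Set.mem_iUnion, Set.mem_singleton_iff] at hx' ⊢
      obtain ⟨α, hα, rfl⟩ := hx'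
      exact ⟨α, hsub i _ hα, rfl⟩
    · intro x hx
      simp only [Set.mem_iUnion] at hx ⊢
      obtain ⟨j, _, hx⟩ := hx
      exact ⟨j, hx⟩
  refine ⟨N, hmain, ⟨aiter V δ N, fun pk t => ?_⟩⟩
  show (⋃ i, iterRel sem i (pk, t)) = _
  rw [hmain pk t, hrepN N]

lemma pol_rep (V : Finset ℕ) (p : Pol F) (hdf : p.dupFree) (hv : p.valsIn V) :
    Rep V (polSem p) := by
  induction p with
  | filter a =>
    obtain ⟨g, hg⟩ := pred_rep V a hv
    refine ⟨fun ρ => if g ρ then {abot V} else ∅, fun pk t => ?_⟩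
    show predSem a (pk, t) = _
    rw [hg pk t]
    by_cases h : g (aprof V pk) = true <;> simp [h, applyAct_abot]
  | mod f n =>
    replace hv : n ∈ V := hv
    refine ⟨fun _ => {fun f' => if f' = f then some ⟨n, hv⟩ else none}, fun pk t => ?_⟩
    show {(Function.update pk f n, t)} = _
    have hupd : Function.update pk f n =
        applyAct (areal (fun f' => if f' = f then some ⟨n, hv⟩ else none : AAct F V)) pk := by
      funext f'
      by_cases h : f' = f <;> simp [applyAct, areal, Function.update_apply, h]
    ext x
    simp only [Set.mem_iUnion, Set.mem_singleton_iff, Finset.mem_singleton]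
    constructor
    · rintro rfl
      exact ⟨_, rfl, by rw [hupd]⟩
    · rintro ⟨α, rfl, rfl⟩
      rw [hupd]
  | union p q ihp ihq =>
    obtain ⟨δ1, h1⟩ := ihp hdf.1 hv.1
    obtain ⟨δ2, h2⟩ := ihq hdf.2 hv.2
    refine ⟨fun ρ => δ1 ρ ∪ δ2 ρ, fun pk t => ?_⟩
    show polSem p (pk, t) ∪ polSem q (pk, t) = _
    rw [h1, h2]
    ext x
    simp only [Set.mem_union, Set.mem_iUnion, Set.mem_singleton_iff, Finset.mem_union]
    constructor
    · rintro (⟨α, hα, rfl⟩ | ⟨α, hα, rfl⟩)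
      · exact ⟨α, Or.inl hα, rfl⟩
      · exact ⟨α, Or.inr hα, rfl⟩
    · rintro ⟨α, hα | hα, rfl⟩
      · exact Or.inl ⟨α, hα, rfl⟩
      · exact Or.inr ⟨α, hα, rfl⟩
  | seq p q ihp ihq =>
    obtain ⟨δ1, h1⟩ := ihp hdf.1 hv.1
    obtain ⟨δ2, h2⟩ := ihq hdf.2 hv.2
    refine ⟨fun ρ => (δ1 ρ).biUnion (fun α => (δ2 (acomp ρ α)).image (acomp α)),
      fun pk t => ?_⟩
    show (⋃ h' ∈ polSem p (pk, t), polSem q h') = _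
    rw [h1]
    ext x
    simp only [Set.mem_iUnion, Set.mem_singleton_iff, Finset.mem_biUnion, Finset.mem_image]
    constructor
    · rintro ⟨h', ⟨α, hα, rfl⟩, hx⟩
      rw [h2, aprof_applyAct] at hx
      simp only [Set.mem_iUnion, Set.mem_singleton_iff] at hx
      obtain ⟨β, hβ, rfl⟩ := hx
      exact ⟨acomp α β, ⟨α, hα, β, hβ, rfl⟩, by rw [applyAct_acomp]⟩
    · rintro ⟨γ, ⟨α, hα, β, hβ, rfl⟩, rfl⟩
      refine ⟨(applyAct (areal α) pk, t), ⟨α, hα, rfl⟩, ?_⟩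
      rw [h2, aprof_applyAct]
      simp only [Set.mem_iUnion, Set.mem_singleton_iff]
      exact ⟨β, hβ, by rw [applyAct_acomp]⟩
  | star p ihp =>
    have hrep : Rep V (polSem p) := ihp hdf hv
    obtain ⟨N, _, hstar⟩ := star_core V (polSem p) hrep
    obtain ⟨δ', hδ'⟩ := hstar
    exact ⟨δ', fun pk t => hδ' pk t⟩
  | dup => exact hdf.elim
/-- **Uniform stabilization of Kleene star for dup-free programs.** For every dup-free
program `p` there is `N` such that for every history `h`,
`⟦p*⟧ h = ⋃_{i ≤ N} F_p^i h`. -/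
theorem star_stabilizes {p : Pol F} (hp : p.dupFree) :
    ∃ N : ℕ, ∀ h : Hist F,
      polSem (.star p) h = ⋃ i ≤ N, iterRel (fun h' => polSem p h') i h := by
  obtain ⟨V, hv⟩ := p.exists_valsIn
  have hrep := pol_rep V p hp hv
  obtain ⟨N, hmain, _⟩ := star_core V (polSem p) hrep
  refine ⟨N, ?_⟩
  rintro ⟨pk, t⟩
  exact hmain pk t

end NetKAT
end

section
/- Dup-free programs are packet functions: for every dup-free NetKAT program p, every packet pk, and every list of packets t, ⟦p⟧ (pk :: t) = { pk' :: t | [pk'] ∈ ⟦p⟧ [pk] }; in particular a dup-free program neither inspects nor changes the tail of its input history. -/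
namespace NetKAT

variable {F : Type} [Fintype F] [LinearOrder F]

/-- The "packet function" property of a history transformer. -/
def PF (g : Hist F → Set (Hist F)) : Prop :=
  ∀ pk (t : List (Packet F)) h, h ∈ g (pk, t) ↔
    ∃ pk' : Packet F, h = (pk', t) ∧
      ((pk', ([] : List (Packet F))) : Hist F) ∈ g (pk, ([] : List (Packet F)))

lemma pf_map (m : Packet F → Packet F) :
    PF (fun h : Hist F => ({(m h.1, h.2)} : Set (Hist F))) := by
  intro pk t h
  simp [Prod.ext_iff]

lemma pf_id : PF (fun h : Hist F => ({h} : Set (Hist F))) := pf_map id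

lemma pf_union {g1 g2 : Hist F → Set (Hist F)} (h1 : PF g1) (h2 : PF g2) :
    PF (fun h => g1 h ∪ g2 h) := by
  intro pk t h
  simp only [Set.mem_union, h1 pk t h, h2 pk t h]
  constructor
  · rintro (⟨pk', rfl, hm⟩ | ⟨pk', rfl, hm⟩)
    · exact ⟨pk', rfl, Or.inl hm⟩
    · exact ⟨pk', rfl, Or.inr hm⟩
  · rintro ⟨pk', rfl, hm | hm⟩
    · exact Or.inl ⟨pk', rfl, hm⟩
    · exact Or.inr ⟨pk', rfl, hm⟩

lemma pf_seq {g1 g2 : Hist F → Set (Hist F)} (h1 : PF g1) (h2 : PF g2) :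
    PF (fun h => ⋃ h' ∈ g1 h, g2 h') := by
  intro pk t h
  simp only [Set.mem_iUnion, exists_prop]
  constructor
  · rintro ⟨h', hh', hmem⟩
    obtain ⟨pk1, rfl, hm1⟩ := (h1 pk t h').mp hh'
    obtain ⟨pk2, rfl, hm2⟩ := (h2 pk1 t h).mp hmem
    exact ⟨pk2, rfl, ⟨(pk1, []), hm1, (h2 pk1 [] _).mpr ⟨pk2, rfl, hm2⟩⟩⟩
  · rintro ⟨pk2, rfl, h', hh', hmem⟩
    obtain ⟨pk1, rfl, hm1⟩ := (h1 pk [] h').mp hh'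
    obtain ⟨pk2', heq, hm2⟩ := (h2 pk1 [] _).mp hmem
    have hm2' : (pk2, ([] : List (Packet F))) ∈ g2 (pk1, []) := by
      rw [show pk2 = pk2' from congrArg Prod.fst heq]; exact hm2
    exact ⟨(pk1, t), (h1 pk t _).mpr ⟨pk1, rfl, hm1⟩, (h2 pk1 t _).mpr ⟨pk2, rfl, hm2'⟩⟩

lemma pf_pred (a : Pred F) : PF (predSem a) := by
  induction a with
  | id => exact pf_id
  | drop => intro pk t h; simp [predSem]
  | test f n =>
    intro pk t h
    by_cases hc : pk f = n <;> simp [predSem, hc, Prod.ext_iff] <;> tauto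
  | or a b iha ihb => exact pf_union iha ihb
  | and a b iha ihb => exact pf_seq iha ihb
  | not a iha =>
    intro pk t h
    simp only [predSem, Set.mem_diff, Set.mem_singleton_iff]
    constructor
    · rintro ⟨rfl, hn⟩
      refine ⟨pk, rfl, rfl, fun hm => hn ?_⟩
      exact (iha pk t _).mpr ⟨pk, rfl, hm⟩
    · rintro ⟨pk', rfl, heq, hn⟩
      have hpk : pk' = pk := congrArg Prod.fst heq
      refine ⟨by rw [hpk], fun hm => hn ?_⟩
      obtain ⟨pk2, heq2, hm2⟩ := (iha pk t _).mp hm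
      rw [show pk' = pk2 from congrArg Prod.fst heq2]
      exact hm2

lemma pf_iter {g : Hist F → Set (Hist F)} (hg : PF g) (i : ℕ) :
    PF (iterRel g i) := by
  induction i with
  | zero => exact pf_id
  | succ i ih => exact pf_seq hg ih

lemma pf_star {g : Hist F → Set (Hist F)} (hg : PF g) :
    PF (fun h => ⋃ i : ℕ, iterRel g i h) := by
  intro pk t h
  simp only [Set.mem_iUnion]
  constructor
  · rintro ⟨i, hi⟩
    obtain ⟨pk', rfl, hm⟩ := (pf_iter hg i pk t h).mp hi
    exact ⟨pk', rfl, i, hm⟩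
  · rintro ⟨pk', rfl, i, hm⟩
    exact ⟨i, (pf_iter hg i pk t _).mpr ⟨pk', rfl, hm⟩⟩

lemma pf_pol {p : Pol F} (hp : p.dupFree) : PF (polSem p) := by
  induction p with
  | filter a => exact pf_pred a
  | mod f n => exact pf_map (fun pk => Function.update pk f n)
  | union p q ihp ihq => exact pf_union (ihp hp.1) (ihq hp.2)
  | seq p q ihp ihq => exact pf_seq (ihp hp.1) (ihq hp.2)
  | star p ihp => exact pf_star (ihp hp)
  | dup => exact absurd hp (by simp [Pol.dupFree])

/-- **Dup-free programs are packet functions.** For every dup-free program `p`, packet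
`pk` and tail `t`, `⟦p⟧ (pk :: t) = { pk' :: t | [pk'] ∈ ⟦p⟧ [pk] }`. -/
theorem dupFree_packet_function {p : Pol F} (hp : p.dupFree)
    (pk : Packet F) (t : List (Packet F)) :
    polSem p (pk, t) =
      {h : Hist F | ∃ pk' : Packet F,
        ((pk', ([] : List (Packet F))) : Hist F) ∈ polSem p (pk, ([] : List (Packet F)))
        ∧ h = (pk', t)} := by
  ext h
  rw [pf_pol hp pk t h]
  simp only [Set.mem_setOf_eq]
  tauto

end NetKAT
end
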